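/- For any probability distribution P_X on a finite set and ε ∈ (0,1), the single-system SDP f_SDP(P_X, ε) := inf { λ : λ·𝟙 ≥ θ, 𝒫(θ) ≤ 𝟙, Tr[ψ_X θ] ≥ 1 − ε², θ ≥ 0 } equals the quadratic program f_QP(P_X, ε) := inf { Σ_x g_x² : Σ_x g_x p_x ≥ √(1−ε²), 0 ≤ g_x ≤ 1 }. -/

import Mathlib

open Matrix Finset
open scoped ComplexOrder

/-- Outer product `|v⟩⟨v|`. -/
noncomputable def outer {n : Type*} (v : n → ℂ) : Matrix n n ℂ :=
  Matrix.of fun i j => v i * star (v j)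

/-- The pinching map `𝒫(θ) = Σ_x |x⟩⟨x| ⟨x|θ|x⟩`. -/
noncomputable def pinch {d : ℕ} (θ : Matrix (Fin d) (Fin d) ℂ) : Matrix (Fin d) (Fin d) ℂ :=
  Matrix.diagonal fun x => θ x x

/-- The single-system SDP `f_SDP(P_X, ε)`, with `ψ_X = |ψ_X⟩⟨ψ_X|`, `|ψ_X⟩ = Σ_x p_x |x⟩`. -/
noncomputable def fSDP {d : ℕ} (p : Fin d → ℝ) (ε : ℝ) : ℝ :=
  sInf {l : ℝ | 0 ≤ l ∧ ∃ θ : Matrix (Fin d) (Fin d) ℂ,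
    ((l : ℂ) • (1 : Matrix (Fin d) (Fin d) ℂ) - θ).PosSemidef ∧
    ((1 : Matrix (Fin d) (Fin d) ℂ) - pinch θ).PosSemidef ∧
    1 - ε ^ 2 ≤ (((outer fun x => (p x : ℂ)) * θ).trace).re ∧
    θ.PosSemidef}

/-- The quadratic program `f_QP(P_X, ε)` from the paper. -/
noncomputable def fQP {d : ℕ} (p : Fin d → ℝ) (ε : ℝ) : ℝ :=
  sInf {v : ℝ | ∃ g : Fin d → ℝ, (∀ x, 0 ≤ g x ∧ g x ≤ 1) ∧
    Real.sqrt (1 - ε ^ 2) ≤ ∑ x, g x * p x ∧ v = ∑ x, (g x) ^ 2}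

/-! A QP point `g` yields the SDP point `θ = |g⟩⟨g|` of value `∑ g_x²`: Cauchy–Schwarz gives
`θ ≤ ‖g‖² 𝟙`, the pinching of `θ` is `diag (g_x²) ≤ 𝟙`, and `Tr[ψ_X θ] = (∑ g_x p_x)²`.
Conversely, for an SDP point `(λ, θ)` let `t = ⟨ψ|θ|ψ⟩ ≥ 1 - ε²` and `g_x = |(θψ)_x| / √t`.
Cauchy–Schwarz for the semi-inner product `⟨a|θ|b⟩` gives `|(θψ)_x|² ≤ θ_xx t ≤ t`, and, applied to
`θψ` and `ψ` together with `θ ≤ λ 𝟙`, also `‖θψ‖⁴ ≤ λ ‖θψ‖² t`, i.e. `∑ g_x² ≤ λ`; finally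
`∑ |(θψ)_x| p_x ≥ Re ⟨ψ|θψ⟩ = t`, so `∑ g_x p_x ≥ √t`. Thus every value of either program is
bounded below by a value of the other, and the infima agree. -/

namespace Matrix.PosSemidef

variable {n 𝕜 : Type*} [Fintype n] [RCLike 𝕜] {A : Matrix n n 𝕜}

theorem norm_dotProduct_mulVec_sq_le (hA : A.PosSemidef) (x y : n → 𝕜) :
    ‖star x ⬝ᵥ (A *ᵥ y)‖ ^ 2 ≤
      RCLike.re (star x ⬝ᵥ (A *ᵥ x)) * RCLike.re (star y ⬝ᵥ (A *ᵥ y)) := by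
  let := A.toSeminormedAddCommGroup hA
  let := A.toInnerProductSpace hA
  have h := inner_mul_inner_self_le (𝕜 := 𝕜) x y
  have inner_eq (a b : n → 𝕜) : inner 𝕜 a b = star a ⬝ᵥ (A *ᵥ b) := dotProduct_comm _ _
  rwa [norm_inner_symm y x, ← sq, inner_eq, inner_eq, inner_eq] at h

theorem norm_mulVec_apply_sq_le [DecidableEq n] (hA : A.PosSemidef) (y : n → 𝕜) (i : n) :
    ‖(A *ᵥ y) i‖ ^ 2 ≤ RCLike.re (A i i) * RCLike.re (star y ⬝ᵥ (A *ᵥ y)) := by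
  simpa [mulVec_single] using hA.norm_dotProduct_mulVec_sq_le (Pi.single i 1) y

end Matrix.PosSemidef

theorem outer_eq_vecMulVec {n : Type*} (v : n → ℂ) : outer v = vecMulVec v (star v) := rfl

section Complex

variable {n : Type*} [Fintype n]

theorem star_dotProduct_self_eq_sum_norm_sq (v : n → ℂ) :
    star v ⬝ᵥ v = ((∑ i, ‖v i‖ ^ 2 : ℝ) : ℂ) := by
  simp [dotProduct, Complex.conj_mul']

theorem Matrix.PosSemidef.sum_norm_mulVec_sq_le [DecidableEq n] {A : Matrix n n ℂ} {l : ℝ}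
    (hl : 0 ≤ l) (hA : A.PosSemidef) (hAl : ((l : ℂ) • 1 - A).PosSemidef) (y : n → ℂ) :
    ∑ i, ‖(A *ᵥ y) i‖ ^ 2 ≤ l * (star y ⬝ᵥ (A *ᵥ y)).re := by
  set u := A *ᵥ y
  set N := ∑ i, ‖u i‖ ^ 2
  have hN : 0 ≤ N := by positivity
  have hAu : (star u ⬝ᵥ (A *ᵥ u)).re ≤ l * N := by
    have := hAl.re_dotProduct_nonneg u
    simp only [sub_mulVec, smul_mulVec, one_mulVec, dotProduct_sub, dotProduct_smul,
      star_dotProduct_self_eq_sum_norm_sq, smul_eq_mul, RCLike.re_to_complex, Complex.sub_re,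
      ← Complex.ofReal_mul, Complex.ofReal_re, sub_nonneg] at this
    exact this
  have hcs := hA.norm_dotProduct_mulVec_sq_le u y
  rw [star_dotProduct_self_eq_sum_norm_sq, Complex.norm_real, Real.norm_of_nonneg hN] at hcs
  have ht := hA.re_dotProduct_nonneg y
  simp only [RCLike.re_to_complex] at hcs ht
  rcases hN.eq_or_lt with hN0 | hNpos
  · rw [← hN0]; positivity
  · refine le_of_mul_le_mul_left ?_ hNpos
    calc N * N = N ^ 2 := (sq N).symm
      _ ≤ (star u ⬝ᵥ (A *ᵥ u)).re * (star y ⬝ᵥ u).re := hcs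
      _ ≤ l * N * (star y ⬝ᵥ u).re := mul_le_mul_of_nonneg_right hAu ht
      _ = N * (l * (star y ⬝ᵥ u).re) := by ring

theorem posSemidef_outer (v : n → ℂ) : (outer v).PosSemidef :=
  posSemidef_vecMulVec_self_star v

theorem trace_outer_mul (v : n → ℂ) (A : Matrix n n ℂ) :
    (outer v * A).trace = star v ⬝ᵥ (A *ᵥ v) := by
  rw [trace_mul_comm, outer_eq_vecMulVec, mul_vecMulVec, trace_vecMulVec, dotProduct_comm]

theorem star_dotProduct_outer_mulVec (v x : n → ℂ) :
    star x ⬝ᵥ (outer v *ᵥ x) = ((‖star v ⬝ᵥ x‖ ^ 2 : ℝ) : ℂ) := by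
  rw [outer_eq_vecMulVec, vecMulVec_mulVec, op_smul_eq_smul, dotProduct_smul, smul_eq_mul,
    star_dotProduct x v, Complex.star_def, Complex.mul_conj', Complex.ofReal_pow]

theorem posSemidef_smul_one_sub_outer [DecidableEq n] (v : n → ℂ) :
    (((∑ i, ‖v i‖ ^ 2 : ℝ) : ℂ) • (1 : Matrix n n ℂ) - outer v).PosSemidef := by
  refine .of_dotProduct_mulVec_nonneg
    ((isHermitian_one.smul (Complex.conj_ofReal _)).sub (posSemidef_outer v).isHermitian)
    fun x => ?_
  have hcs := PosSemidef.one.norm_dotProduct_mulVec_sq_le v x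
  simp only [one_mulVec, star_dotProduct_self_eq_sum_norm_sq, RCLike.re_to_complex,
    Complex.ofReal_re] at hcs
  rw [sub_mulVec, smul_mulVec, one_mulVec, dotProduct_sub, dotProduct_smul, smul_eq_mul,
    star_dotProduct_self_eq_sum_norm_sq, star_dotProduct_outer_mulVec, ← Complex.ofReal_mul,
    ← Complex.ofReal_sub, Complex.zero_le_real, sub_nonneg]
  exact hcs

end Complex

theorem pinch_outer {d : ℕ} (v : Fin d → ℂ) :
    pinch (outer v) = diagonal fun x => ((‖v x‖ ^ 2 : ℝ) : ℂ) := by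
  simp [pinch, outer, Complex.mul_conj']

theorem re_star_ofReal_dotProduct_le {n : Type*} [Fintype n] {p : n → ℝ} (hp : ∀ x, 0 ≤ p x)
    (u : n → ℂ) : (star (fun x => (p x : ℂ)) ⬝ᵥ u).re ≤ ∑ x, ‖u x‖ * p x := by
  simp only [dotProduct, Pi.star_apply, Complex.star_def, Complex.conj_ofReal, Complex.re_sum,
    Complex.re_ofReal_mul]
  exact sum_le_sum fun x _ => by
    rw [mul_comm]; exact mul_le_mul_of_nonneg_right (Complex.re_le_norm _) (hp x)

theorem exists_weights_of_posSemidef {n : Type*} [Fintype n] [DecidableEq n]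
    {θ : Matrix n n ℂ} {p : n → ℝ} {l : ℝ} (hp : ∀ x, 0 ≤ p x) (hl : 0 ≤ l)
    (hθ : θ.PosSemidef) (hθl : ((l : ℂ) • 1 - θ).PosSemidef) (hdiag : ∀ x, θ x x ≤ 1)
    (ht : 0 < (star (fun x => (p x : ℂ)) ⬝ᵥ (θ *ᵥ fun x => (p x : ℂ))).re) :
    ∃ g : n → ℝ, (∀ x, 0 ≤ g x ∧ g x ≤ 1) ∧
      √(star (fun x => (p x : ℂ)) ⬝ᵥ (θ *ᵥ fun x => (p x : ℂ))).re ≤ ∑ x, g x * p x ∧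
      ∑ x, g x ^ 2 ≤ l := by
  set ψ : n → ℂ := fun x => (p x : ℂ)
  set t := (star ψ ⬝ᵥ (θ *ᵥ ψ)).re
  set u := θ *ᵥ ψ
  have hst : 0 < √t := Real.sqrt_pos.mpr ht
  refine ⟨fun x => ‖u x‖ / √t, fun x => ⟨by positivity, ?_⟩, ?_, ?_⟩
  · rw [div_le_one hst, Real.le_sqrt (norm_nonneg _) ht.le]
    calc ‖u x‖ ^ 2 ≤ (θ x x).re * t := hθ.norm_mulVec_apply_sq_le ψ x
      _ ≤ 1 * t := mul_le_mul_of_nonneg_right (Complex.le_def.mp (hdiag x)).1 ht.le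
      _ = t := one_mul t
  · calc √t = t / √t := Real.div_sqrt.symm
      _ ≤ (∑ x, ‖u x‖ * p x) / √t := by gcongr; exact re_star_ofReal_dotProduct_le hp u
      _ = ∑ x, ‖u x‖ / √t * p x := by rw [sum_div]; congr! 1; ring
  · calc ∑ x, (‖u x‖ / √t) ^ 2 = (∑ x, ‖u x‖ ^ 2) / t := by
          simp only [div_pow, Real.sq_sqrt ht.le, sum_div]
      _ ≤ l := by
          rw [div_le_iff₀ ht]; exact hθ.sum_norm_mulVec_sq_le hl hθl ψ

def IsSDPFeasible {d : ℕ} (p : Fin d → ℝ) (ε l : ℝ) (θ : Matrix (Fin d) (Fin d) ℂ) : Prop :=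
  ((l : ℂ) • (1 : Matrix (Fin d) (Fin d) ℂ) - θ).PosSemidef ∧
    ((1 : Matrix (Fin d) (Fin d) ℂ) - pinch θ).PosSemidef ∧
    1 - ε ^ 2 ≤ (((outer fun x => (p x : ℂ)) * θ).trace).re ∧
    θ.PosSemidef

section Feasibility

variable {d : ℕ} {p : Fin d → ℝ} {ε : ℝ}

theorem isSDPFeasible_outer {g : Fin d → ℝ} (hg : ∀ x, 0 ≤ g x ∧ g x ≤ 1)
    (hgp : √(1 - ε ^ 2) ≤ ∑ x, g x * p x) :
    IsSDPFeasible p ε (∑ x, g x ^ 2) (outer fun x => (g x : ℂ)) := by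
  refine ⟨by simpa using posSemidef_smul_one_sub_outer fun x => (g x : ℂ), ?_, ?_,
    posSemidef_outer _⟩
  · rw [pinch_outer, ← diagonal_one, diagonal_sub, posSemidef_diagonal_iff]
    intro x
    rw [← Complex.ofReal_one, ← Complex.ofReal_sub, Complex.zero_le_real, sub_nonneg,
      Complex.norm_real, Real.norm_eq_abs, sq_abs]
    exact pow_le_one₀ (hg x).1 (hg x).2
  · have hdot : star (fun x => (g x : ℂ)) ⬝ᵥ (fun x => (p x : ℂ)) =
        ((∑ x, g x * p x : ℝ) : ℂ) := by
      simp [dotProduct]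
    rw [trace_outer_mul, star_dotProduct_outer_mulVec, hdot, Complex.ofReal_re, Complex.norm_real,
      Real.norm_eq_abs, sq_abs]
    exact (Real.sqrt_le_iff.mp hgp).2

theorem exists_le_of_isSDPFeasible (hp : ∀ x, 0 ≤ p x) (hε : ε ^ 2 < 1) {l : ℝ} (hl : 0 ≤ l)
    {θ : Matrix (Fin d) (Fin d) ℂ} (hθ : IsSDPFeasible p ε l θ) :
    ∃ g : Fin d → ℝ, (∀ x, 0 ≤ g x ∧ g x ≤ 1) ∧ √(1 - ε ^ 2) ≤ ∑ x, g x * p x ∧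
      ∑ x, g x ^ 2 ≤ l := by
  obtain ⟨hθl, hpinch, htrace, hθ⟩ := hθ
  rw [trace_outer_mul] at htrace
  have hdiag (x : Fin d) : θ x x ≤ 1 := by
    simpa [pinch] using hpinch.diag_nonneg (i := x)
  obtain ⟨g, hg, hgp, hgl⟩ :=
    exists_weights_of_posSemidef hp hl hθ hθl hdiag (by linarith)
  exact ⟨g, hg, (Real.sqrt_le_sqrt htrace).trans hgp, hgl⟩

end Feasibility

theorem fSDP_eq_fQP_general {d : ℕ} (p : Fin d → ℝ) (hp : ∀ x, 0 ≤ p x)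
    (ε : ℝ) (hε : ε ∈ Set.Ioo (0 : ℝ) 1) :
    fSDP p ε = fQP p ε := by
  have hε2 : ε ^ 2 < 1 := by nlinarith [hε.1, hε.2]
  refine csInf_eq_csInf_of_forall_exists_le ?_ ?_
  · rintro l ⟨hl, θ, hθ⟩
    obtain ⟨g, hg, hgp, hgl⟩ := exists_le_of_isSDPFeasible hp hε2 hl hθ
    exact ⟨_, ⟨g, hg, hgp, rfl⟩, hgl⟩
  · rintro _ ⟨g, hg, hgp, rfl⟩
    exact ⟨_, ⟨by positivity, _, isSDPFeasible_outer hg hgp⟩, le_rfl⟩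

/-- `f_SDP(P_X, ε) = f_QP(P_X, ε)` for every probability distribution `P_X`. -/
theorem fSDP_eq_fQP {d : ℕ} (p : Fin d → ℝ) (hp : ∀ x, 0 ≤ p x)
    (hps : ∑ x, p x = 1) (ε : ℝ) (hε : ε ∈ Set.Ioo (0 : ℝ) 1) :
    fSDP p ε = fQP p ε :=
  fSDP_eq_fQP_general p hp ε hε
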